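/- Fix positive integers d and n, a finite index set A, and matrices V_{α,m} ∈ M_d(ℂ) for α ∈ A and m ∈ {0, …, n}. Consider the map K(ρ_n, …, ρ_0) = Σ_{m=0}^n Σ_{α ∈ A} V_{α,m}† ρ_m V_{α,m}. Then Tr K(ρ_n, …, ρ_0) = 1 for all d × d density matrices ρ_0, …, ρ_n if and only if there exist real numbers p_0, …, p_n ≥ 0 with Σ_m p_m = 1 such that Σ_{α ∈ A} V_{α,m} V_{α,m}† = p_m · I for each m. -/

import Mathlib

/-!
Write `W m = Σ_α V_{α,m} V_{α,m}†`, so that by cyclicity the trace of the map is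
`Σ_m Tr (W m ρ_m)`. If this is always `1`, freezing every argument but the `m`-th at a fixed pure
state shows that `σ ↦ Tr (W m σ)` is a constant `c m` on density matrices. Testing it on the
rank-one states `x x† / (x† x)` gives `x† W m x = c m · x† x` for every `x`, hence
`W m = c m • 1` by polarization; `c m ≥ 0` because `W m` is positive semidefinite, and
`Σ_m c m = 1`.
-/

open scoped ComplexOrder Matrix

open Matrix

theorem Fintype.apply_eq_of_forall_sum_eq {ι X R : Type*} [Fintype ι] [DecidableEq ι]
    [AddCancelCommMonoid R] {P : X → Prop} {f : ι → X → R} {c : R}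
    (h : ∀ x : ι → X, (∀ i, P (x i)) → ∑ i, f i (x i) = c)
    {x₀ : X} (hx₀ : P x₀) (i : ι) {y : X} (hy : P y) : f i y = f i x₀ := by
  have hy' := h (Function.update (fun _ => x₀) i y) fun j => by
    rcases eq_or_ne j i with rfl | hj
    · simpa
    · simpa [hj]
  have hx₀' := h (fun _ => x₀) fun _ => hx₀
  rw [Finset.sum_eq_add_sum_sdiff_singleton_of_mem (Finset.mem_univ i)] at hx₀'
  simp only [Function.apply_update f, Finset.sum_update_of_mem (Finset.mem_univ i)] at hy'
  exact add_right_cancel (hy'.trans hx₀'.symm)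

theorem Matrix.trace_sum_conjTranspose_mul_mul {ι m n R : Type*} [Fintype ι] [Fintype m]
    [Fintype n] [CommSemiring R] [StarRing R] (V : ι → Matrix n m R) (ρ : Matrix n n R) :
    (∑ α, (V α)ᴴ * ρ * V α).trace = ((∑ α, V α * (V α)ᴴ) * ρ).trace := by
  simp only [trace_sum, Finset.sum_mul]
  exact Finset.sum_congr rfl fun α _ => trace_mul_cycle _ _ _

theorem Matrix.trace_mul_vecMulVec_star {n R : Type*} [Fintype n] [CommSemiring R] [StarRing R]
    (M : Matrix n n R) (x : n → R) :
    (M * vecMulVec x (star x)).trace = star x ⬝ᵥ (M *ᵥ x) := by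
  rw [mul_vecMulVec, trace_vecMulVec, dotProduct_comm]

theorem Matrix.eq_smul_one_of_forall_star_dotProduct_mulVec {n : Type*} [Fintype n]
    [DecidableEq n] {M : Matrix n n ℂ} {c : ℂ}
    (h : ∀ x, star x ⬝ᵥ (M *ᵥ x) = c * (star x ⬝ᵥ x)) : M = c • 1 := by
  refine (toLpLin 2 2).injective <| (ext_inner_map _ _).1 fun x => ?_
  rw [← inner_conj_symm, ← inner_conj_symm _ x]
  congr 1
  simp only [EuclideanSpace.inner_eq_star_dotProduct, ofLp_toLpLin, toLin'_apply,
    dotProduct_comm _ (star _), h, smul_mulVec, one_mulVec, dotProduct_smul, smul_eq_mul]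

theorem Matrix.eq_smul_one_of_forall_trace_mul_eq {n : Type*} [Fintype n] [DecidableEq n]
    {M : Matrix n n ℂ} {c : ℂ}
    (h : ∀ σ : Matrix n n ℂ, σ.PosSemidef → σ.trace = 1 → (M * σ).trace = c) :
    M = c • 1 := by
  refine eq_smul_one_of_forall_star_dotProduct_mulVec fun x => ?_
  rcases eq_or_ne x 0 with rfl | hx
  · simp
  have ht : star x ⬝ᵥ x ≠ 0 := by simpa using hx
  have hσ := h ((star x ⬝ᵥ x)⁻¹ • vecMulVec x (star x))
    ((posSemidef_vecMulVec_self_star x).smul (inv_nonneg_of_nonneg (dotProduct_star_self_nonneg x)))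
    (by rw [trace_smul, trace_vecMulVec, dotProduct_comm x, smul_eq_mul, inv_mul_cancel₀ ht])
  rw [Matrix.mul_smul, trace_smul, trace_mul_vecMulVec_star, smul_eq_mul] at hσ
  rw [← hσ]
  field_simp

/-- Trace preservation of the multi-variable Kraus-form map
`K(ρ_n, …, ρ_0) = Σ_m Σ_α V_{α,m}ᴴ ρ_m V_{α,m}` on all tuples of density
matrices is equivalent to the existence of nonnegative reals `p_m` summing to
one with `Σ_α V_{α,m} V_{α,m}ᴴ = p_m • I` for each `m`. -/
theorem kraus_trace_preserving_iff (d n : ℕ) (hd : 0 < d)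
    (A : Type*) [Fintype A]
    (V : A → Fin (n + 1) → Matrix (Fin d) (Fin d) ℂ) :
    (∀ ρ : Fin (n + 1) → Matrix (Fin d) (Fin d) ℂ,
      (∀ m, (ρ m).PosSemidef ∧ (ρ m).trace = 1) →
      (∑ m : Fin (n + 1), ∑ α : A, (V α m)ᴴ * ρ m * V α m).trace = 1) ↔
    (∃ p : Fin (n + 1) → ℝ, (∀ m, 0 ≤ p m) ∧ (∑ m, p m) = 1 ∧
      ∀ m, (∑ α : A, V α m * (V α m)ᴴ)
        = (p m : ℂ) • (1 : Matrix (Fin d) (Fin d) ℂ)) := by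
  set W := fun m => ∑ α : A, V α m * (V α m)ᴴ
  have htrace (ρ : Fin (n + 1) → Matrix (Fin d) (Fin d) ℂ) :
      (∑ m, ∑ α, (V α m)ᴴ * ρ m * V α m).trace = ∑ m, (W m * ρ m).trace := by
    rw [trace_sum]
    exact Finset.sum_congr rfl fun m _ => trace_sum_conjTranspose_mul_mul _ _
  simp only [htrace]
  constructor
  · intro h
    set e : Fin d → ℂ := Pi.single ⟨0, hd⟩ 1
    set ρ₀ := vecMulVec e (star e)
    have hρ₀ : ρ₀.PosSemidef ∧ ρ₀.trace = 1 :=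
      ⟨posSemidef_vecMulVec_self_star e, by simp [ρ₀, e, trace_vecMulVec]⟩
    have hWc (m) : W m = (W m * ρ₀).trace • 1 :=
      eq_smul_one_of_forall_trace_mul_eq fun σ hσ hσ₁ =>
        Fintype.apply_eq_of_forall_sum_eq (P := fun σ => σ.PosSemidef ∧ σ.trace = 1)
          (f := fun m σ => (W m * σ).trace) h hρ₀ m ⟨hσ, hσ₁⟩
    have hc (m) : 0 ≤ (W m * ρ₀).trace := by
      rw [trace_mul_vecMulVec_star]
      exact (posSemidef_sum _ fun α _ => posSemidef_self_mul_conjTranspose _)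
        |>.dotProduct_mulVec_nonneg e
    choose p hp hpc using fun m => RCLike.nonneg_iff_exists_ofReal.mp (hc m)
    simp only [RCLike.ofReal, Complex.coe_algebraMap] at hpc
    refine ⟨p, hp, ?_, fun m => (hWc m).trans (by rw [hpc])⟩
    have hsum := h (fun _ => ρ₀) fun _ => hρ₀
    simp only [← hpc] at hsum
    exact_mod_cast hsum
  · rintro ⟨p, -, hp, hWp⟩ ρ hρ
    simp only [W, hWp, smul_mul, one_mul, trace_smul, (hρ _).2, smul_eq_mul, mul_one]
    exact_mod_cast hp
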